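/- arXiv:2001.11084 — 2 statements merged into one kernel-verified Lean document; each statement's English description precedes it below -/
import Mathlib

section
/- Let Γ be a finite graph, n : E(Γ) → ℕ_{>0}, and let Γ_n be the graph obtained by subdividing each edge e into a path with n_e edges. Then the number of maximal spanning forests of Γ_n equals Ψ_Γ evaluated at x_e = n_e. -/
/-- A finite (multi)graph: finite sets of vertices and edges with head and tail maps.
Loops and multiple edges are allowed. -/
structure FinGraph where
  V : Type
  E : Type
  [fintypeV : Fintype V]
  [fintypeE : Fintype E]
  [decEqV : DecidableEq V]
  [decEqE : DecidableEq E]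
  s : E → V
  t : E → V

open Finset MeasureTheory

attribute [instance] FinGraph.fintypeV FinGraph.fintypeE FinGraph.decEqV FinGraph.decEqE

namespace FinGraph

variable (G : FinGraph)

/-- The boundary map `d : C₁(Γ,R) → C₀(Γ,R)` of the graph viewed as a CW complex. -/
noncomputable def boundary (R : Type) [CommRing R] : (G.E → R) →ₗ[R] (G.V → R) where
  toFun γ := fun v =>
    ∑ e : G.E, γ e * ((if G.t e = v then (1 : R) else 0) - (if G.s e = v then (1 : R) else 0))
  map_add' a b := by
    funext v
    simp [add_mul, Finset.sum_add_distrib]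
  map_smul' r a := by
    funext v
    simp [Finset.mul_sum, mul_assoc]

/-- The coboundary map `d* : C⁰(Γ,R) → C¹(Γ,R)`. -/
noncomputable def coboundary (R : Type) [CommRing R] : (G.V → R) →ₗ[R] (G.E → R) where
  toFun f := fun e => f (G.t e) - f (G.s e)
  map_add' a b := by funext e; simp; ring
  map_smul' r a := by funext e; simp [mul_sub]

/-- First homology `H₁(Γ,R)`, i.e. the cycle space: the kernel of the boundary map. -/
noncomputable def H1 (R : Type) [CommRing R] : Submodule R (G.E → R) := LinearMap.ker (G.boundary R)

/-- First cohomology `H¹(Γ,R) = C¹(Γ,R)/im d*`. -/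
abbrev H1Cohomology (R : Type) [CommRing R] := (G.E → R) ⧸ LinearMap.range (G.coboundary R)

/-- Pointwise rescaling of cochains by a weight function `x`. -/
noncomputable def scale (R : Type) [CommRing R] (x : G.E → R) : (G.E → R) →ₗ[R] (G.E → R) where
  toFun γ := fun e => x e * γ e
  map_add' a b := by funext e; simp [mul_add]
  map_smul' r a := by funext e; simp; ring

/-- The map `τ_x : H₁(Γ,R) → H¹(Γ,R)`, `γ ↦ ∑_e x_e ⟨γ,e⟩ [e]`. -/
noncomputable def tau (R : Type) [CommRing R] (x : G.E → R) : G.H1 R →ₗ[R] G.H1Cohomology R :=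
  (LinearMap.range (G.coboundary R)).mkQ ∘ₗ (G.scale R x) ∘ₗ (G.H1 R).subtype

/-- A maximal spanning forest, characterised algebraically: a set of edges supporting no
nonzero cycle (i.e. the subgraph is a forest), whose complement has cardinality
`h₁(Γ) = rank H₁(Γ,ℤ)` (i.e. the forest has the maximal number `|V| - c(Γ)` of edges). -/
def IsMaxForest (T : Finset G.E) : Prop :=
  (∀ γ : G.E → ℤ, G.boundary ℤ γ = 0 → (∀ e, e ∉ T → γ e = 0) → γ = 0) ∧
    Tᶜ.card = Module.finrank ℤ (G.H1 ℤ)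

open Classical in
/-- The Kirchhoff polynomial `Ψ_Γ = ∑_{T ∈ Arb(Γ)} ∏_{e ∉ T} x_e` evaluated at `x`. -/
noncomputable def kirchhoff (R : Type) [CommSemiring R] (x : G.E → R) : R :=
  ∑ T ∈ Finset.univ.filter (fun T : Finset G.E => G.IsMaxForest T), ∏ e ∈ Tᶜ, x e

/-- Deletion `Γ ∖ e` of an edge. -/
def deleteEdge (e : G.E) : FinGraph where
  V := G.V
  E := {e' : G.E // e' ≠ e}
  s := fun e' => G.s e'.1
  t := fun e' => G.t e'.1

/-- Contraction `Γ / e` of an edge: the two endpoints of `e` are identified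
(the vertex `s e` is redirected to `t e`), and `e` is removed. -/
def contractEdge (e : G.E) : FinGraph where
  V := G.V
  E := {e' : G.E // e' ≠ e}
  s := fun e' => if G.s e'.1 = G.s e then G.t e else G.s e'.1
  t := fun e' => if G.t e'.1 = G.s e then G.t e else G.t e'.1

/-- `e` is a loop if its two endpoints coincide. -/
def IsLoop (e : G.E) : Prop := G.s e = G.t e

/-- Two vertices are adjacent if some edge joins them. -/
def Adj (u v : G.V) : Prop := ∃ e : G.E, (G.s e = u ∧ G.t e = v) ∨ (G.s e = v ∧ G.t e = u)

/-- Connectivity in the graph. -/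
def Reachable (u v : G.V) : Prop := Relation.ReflTransGen G.Adj u v

/-- `e` is a bridge if after deleting `e` its endpoints are no longer connected. -/
def IsBridge (e : G.E) : Prop := ¬ (G.deleteEdge e).Reachable (G.s e) (G.t e)

/-- `e` is ordinary if it is neither a loop nor a bridge. -/
def IsOrdinary (e : G.E) : Prop := ¬ G.IsLoop e ∧ ¬ G.IsBridge e

/-- The number of connected components of the graph. -/
noncomputable def numComponents : ℕ := Nat.card (Quot G.Adj)

/-- The number of maximal spanning forests of the graph. -/
noncomputable def numMaxForests : ℕ := Nat.card {T : Finset G.E // G.IsMaxForest T}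

end FinGraph

namespace FinGraph

/-- The subdivision (fragmentation) `Γ_n` of `Γ`: each edge `e` is replaced by a path with
`n e` edges, adding `n e − 1` intermediate vertices. -/
def subdivide (G : FinGraph) (n : G.E → ℕ+) : FinGraph where
  V := G.V ⊕ (Σ e : G.E, Fin ((n e : ℕ) - 1))
  E := Σ e : G.E, Fin (n e : ℕ)
  s := fun p =>
    if h : (p.2 : ℕ) = 0 then Sum.inl (G.s p.1)
    else Sum.inr ⟨p.1, ⟨(p.2 : ℕ) - 1, by have := p.2.isLt; omega⟩⟩
  t := fun p =>
    if h : (p.2 : ℕ) = (n p.1 : ℕ) - 1 then Sum.inl (G.t p.1)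
    else Sum.inr ⟨p.1, ⟨(p.2 : ℕ), by have := p.2.isLt; omega⟩⟩

end FinGraph

/-!
A cycle of `Γ_n` is constant along each subdivided edge, since its boundary at an interior
vertex of the path is the difference of the values on the two adjacent pieces. Pulling back
along `Γ_n → Γ` therefore identifies `H₁(Γ_n)` with `H₁(Γ)`, and a set `S` of edges of `Γ_n`
carries no cycle iff the set `T` of edges of `Γ` all of whose pieces lie in `S` carries none.
As `|Sᶜ| ≥ |Tᶜ| ≥ h₁(Γ)`, with equality in the first step iff every edge outside `T` misses
exactly one piece, the maximal forests of `Γ_n` are the maximal forests `T` of `Γ` together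
with a choice of one omitted piece on each `e ∉ T`: there are `∏_{e ∉ T} n_e` such choices.
-/

section Fibers

variable {ι β : Type*} [DecidableEq ι] [Fintype β] [DecidableEq β]

def fiberGaps (π : β → ι) (S : Finset β) (i : ι) : Finset β :=
  Sᶜ.filter (π · = i)

lemma mem_fiberGaps {π : β → ι} {S : Finset β} {i : ι} {b : β} :
    b ∈ fiberGaps π S i ↔ b ∉ S ∧ π b = i := by
  simp [fiberGaps]

lemma eq_of_fiberGaps_eq {π : β → ι} {S S' : Finset β}
    (h : ∀ i, fiberGaps π S i = fiberGaps π S' i) : S = S' := by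
  ext b
  have hb : b ∈ fiberGaps π S (π b) ↔ b ∈ fiberGaps π S' (π b) := by rw [h]
  simpa [mem_fiberGaps] using hb.not

variable [Fintype ι]

def fullFibers (π : β → ι) (S : Finset β) : Finset ι :=
  univ.filter fun i => fiberGaps π S i = ∅

lemma mem_fullFibers {π : β → ι} {S : Finset β} {i : ι} :
    i ∈ fullFibers π S ↔ ∀ b, π b = i → b ∈ S := by
  simp [fullFibers, fiberGaps, filter_eq_empty_iff, not_imp_comm]

variable (π : β → ι)

lemma card_compl_eq_sum_card_fiberGaps (S : Finset β) : #Sᶜ = ∑ i, #(fiberGaps π S i) :=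
  card_eq_sum_card_fiberwise fun _ _ => mem_univ _

lemma card_compl_fullFibers (S : Finset β) :
    #(fullFibers π S)ᶜ = ∑ i, min #(fiberGaps π S i) 1 := by
  rw [fullFibers, compl_filter, card_filter]
  refine sum_congr rfl fun i _ => ?_
  rcases (fiberGaps π S i).eq_empty_or_nonempty with h | h
  · simp [h]
  · simp [h.ne_empty, Nat.one_le_iff_ne_zero.mpr h.card_pos.ne']

lemma card_compl_fullFibers_le (S : Finset β) : #(fullFibers π S)ᶜ ≤ #Sᶜ := by
  rw [card_compl_fullFibers, card_compl_eq_sum_card_fiberGaps π]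
  exact sum_le_sum fun i _ => min_le_left _ _

lemma card_compl_fullFibers_eq_iff (S : Finset β) :
    #(fullFibers π S)ᶜ = #Sᶜ ↔ ∀ i, #(fiberGaps π S i) ≤ 1 := by
  rw [card_compl_fullFibers, card_compl_eq_sum_card_fiberGaps π,
    sum_eq_sum_iff_of_le fun i _ => min_le_left _ _]
  simp

def puncture (T : Finset ι) (g : ∀ i : {i // i ∉ T}, {b // π b = i}) : Finset β :=
  (univ.image fun i => (g i : β))ᶜ

lemma fiberGaps_puncture (T : Finset ι) (g : ∀ i : {i // i ∉ T}, {b // π b = i}) (i : ι) :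
    fiberGaps π (puncture π T g) i = if h : i ∈ T then ∅ else {(g ⟨i, h⟩ : β)} := by
  ext b
  simp only [mem_fiberGaps, puncture, mem_compl, not_not, mem_image, mem_univ, true_and]
  constructor
  · rintro ⟨⟨⟨j, hj⟩, rfl⟩, rfl⟩
    have reindex : ∀ k (hk : k ∉ T), k = j → (g ⟨j, hj⟩ : β) = g ⟨k, hk⟩ := by
      rintro k hk rfl
      rfl
    simpa [(g ⟨j, hj⟩).2, hj] using reindex _ _ (g ⟨j, hj⟩).2
  · split_ifs with hi
    · simp
    · rintro hb
      rw [mem_singleton] at hb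
      exact ⟨⟨⟨i, hi⟩, hb.symm⟩, hb ▸ (g ⟨i, hi⟩).2⟩

lemma fullFibers_puncture (T : Finset ι) (g : ∀ i : {i // i ∉ T}, {b // π b = i}) :
    fullFibers π (puncture π T g) = T := by
  ext i
  by_cases h : i ∈ T <;> simp [fullFibers, fiberGaps_puncture, h]

lemma card_fiberGaps_puncture_le (T : Finset ι) (g : ∀ i : {i // i ∉ T}, {b // π b = i})
    (i : ι) : #(fiberGaps π (puncture π T g) i) ≤ 1 := by
  rw [fiberGaps_puncture]
  split_ifs <;> simp

lemma exists_eq_puncture_fullFibers {S : Finset β} (hS : ∀ i, #(fiberGaps π S i) ≤ 1) :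
    ∃ g, S = puncture π (fullFibers π S) g := by
  have gap : ∀ i : {i // i ∉ fullFibers π S}, ∃ b : {b // π b = i},
      fiberGaps π S i = {b.1} := by
    rintro ⟨i, hi⟩
    have hne : (fiberGaps π S i).Nonempty := by
      simpa [fullFibers, nonempty_iff_ne_empty] using hi
    obtain ⟨b, hb⟩ := card_eq_one.mp (le_antisymm (hS i) (card_pos.mpr hne))
    exact ⟨⟨b, (mem_fiberGaps.mp (hb ▸ mem_singleton_self b)).2⟩, hb⟩
  choose g hg using gap
  refine ⟨g, eq_of_fiberGaps_eq (π := π) fun i => ?_⟩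
  rw [fiberGaps_puncture]
  split_ifs with hi
  · simpa [fullFibers] using hi
  · exact hg ⟨i, hi⟩

theorem card_subtype_fullFibers (P : Finset ι → Prop) [DecidablePred P] :
    Nat.card {S : Finset β // P (fullFibers π S) ∧ ∀ i, #(fiberGaps π S i) ≤ 1} =
      ∑ T ∈ univ.filter P, ∏ i ∈ Tᶜ, #(univ.filter (π · = i)) := by
  let F : (Σ T : {T // P T}, ∀ i : {i // i ∉ T.1}, {b // π b = i}) →
      {S : Finset β // P (fullFibers π S) ∧ ∀ i, #(fiberGaps π S i) ≤ 1} :=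
    fun Tg => ⟨puncture π Tg.1 Tg.2, by rw [fullFibers_puncture]; exact Tg.1.2,
      card_fiberGaps_puncture_le π _ _⟩
  have hF : Function.Bijective F := by
    refine ⟨?_, fun ⟨S, hP, hS⟩ => ?_⟩
    · rintro ⟨⟨T, hT⟩, g⟩ ⟨⟨T', hT'⟩, g'⟩ h
      have hS : puncture π T g = puncture π T' g' := congrArg Subtype.val h
      obtain rfl : T = T' := by rw [← fullFibers_puncture π T g, hS, fullFibers_puncture]
      obtain rfl : g = g' := funext fun ⟨i, hi⟩ => Subtype.ext <| by
        simpa [fiberGaps_puncture, hi] using congrArg (fiberGaps π · i) hS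
      rfl
    · obtain ⟨g, hg⟩ := exists_eq_puncture_fullFibers π hS
      exact ⟨⟨⟨fullFibers π S, hP⟩, g⟩, Subtype.ext hg.symm⟩
  rw [← Nat.card_eq_of_bijective F hF, Nat.card_sigma,
    sum_subtype (univ.filter P) (p := P) (by simp)
      fun T => ∏ i ∈ Tᶜ, #(univ.filter (π · = i))]
  refine Fintype.sum_congr _ _ fun T => ?_
  rw [Nat.card_pi, ← prod_subtype (T.1)ᶜ (p := fun i => i ∉ T.1) (by simp)
    fun i => Nat.card {b // π b = i}]
  simp [Fintype.card_subtype]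

end Fibers

lemma Fintype.sum_sigma_fin_ite {ι : Type*} [Fintype ι] {m : ι → ℕ} {M : Type*}
    [AddCommMonoid M] (P : ι → Prop) [DecidablePred P] (c : ι → ℕ)
    (hc : ∀ i, P i → c i < m i) (f : (Σ i, Fin (m i)) → M) :
    ∑ p, (if P p.1 ∧ (p.2 : ℕ) = c p.1 then f p else 0) =
      ∑ i, if h : P i then f ⟨i, ⟨c i, hc i h⟩⟩ else 0 := by
  rw [Fintype.sum_sigma]
  refine Fintype.sum_congr _ _ fun i => ?_
  split_ifs with h
  · rw [Fintype.sum_eq_single (⟨c i, hc i h⟩ : Fin (m i))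
      fun j hj => if_neg fun hj' => hj (Fin.ext hj'.2)]
    simp [h]
  · simp [h]

namespace FinGraph

lemma boundary_apply (G : FinGraph) {R : Type} [CommRing R] (γ : G.E → R) (v : G.V) :
    G.boundary R γ v =
      ∑ e, (if G.t e = v then γ e else 0) - ∑ e, (if G.s e = v then γ e else 0) := by
  simp [boundary, mul_sub, sum_sub_distrib]

variable {G : FinGraph} {n : G.E → ℕ+}

def parentEdge (p : (G.subdivide n).E) : G.E := p.1

lemma subdivide_t_eq_inr_iff {p : (G.subdivide n).E} {e : G.E} {k : Fin (n e - 1)} :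
    (G.subdivide n).t p = .inr ⟨e, k⟩ ↔ p.1 = e ∧ (p.2 : ℕ) = k := by
  obtain ⟨e', i⟩ := p
  simp only [subdivide]
  split_ifs with h
  · simp only [false_iff, not_and]
    rintro rfl
    omega
  · simp only [Sum.inr.injEq, Sigma.mk.inj_iff, and_congr_right_iff]
    rintro rfl
    simp [Fin.ext_iff]

lemma subdivide_s_eq_inr_iff {p : (G.subdivide n).E} {e : G.E} {k : Fin (n e - 1)} :
    (G.subdivide n).s p = .inr ⟨e, k⟩ ↔ p.1 = e ∧ (p.2 : ℕ) = k + 1 := by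
  obtain ⟨e', ⟨i, hi⟩⟩ := p
  simp only [subdivide]
  split_ifs with h
  · simp only [false_iff, not_and]
    omega
  · simp only [Sum.inr.injEq, Sigma.mk.inj_iff, and_congr_right_iff]
    rintro rfl
    simp only [heq_eq_eq, Fin.ext_iff]
    omega

lemma subdivide_t_eq_inl_iff {p : (G.subdivide n).E} {v : G.V} :
    (G.subdivide n).t p = .inl v ↔ G.t p.1 = v ∧ (p.2 : ℕ) = n p.1 - 1 := by
  obtain ⟨e', i⟩ := p
  simp only [subdivide]
  split_ifs with h <;> simp [h]

lemma subdivide_s_eq_inl_iff {p : (G.subdivide n).E} {v : G.V} :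
    (G.subdivide n).s p = .inl v ↔ G.s p.1 = v ∧ (p.2 : ℕ) = 0 := by
  obtain ⟨e', i⟩ := p
  simp only [subdivide]
  split_ifs with h <;> simp [h]

lemma boundary_subdivide_inr {R : Type} [CommRing R] (γ : (G.subdivide n).E → R) (e : G.E)
    (k : Fin (n e - 1)) :
    (G.subdivide n).boundary R γ (.inr ⟨e, k⟩) =
      γ ⟨e, ⟨k, by omega⟩⟩ - γ ⟨e, ⟨k + 1, by omega⟩⟩ := by
  refine (boundary_apply _ γ _).trans ?_
  simp only [subdivide_t_eq_inr_iff, subdivide_s_eq_inr_iff]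
  have hk : ∀ i, i = e → (k : ℕ) < n i := by rintro _ rfl; omega
  have hk' : ∀ i, i = e → (k : ℕ) + 1 < n i := by rintro _ rfl; omega
  exact congrArg₂ (· - ·)
    ((Fintype.sum_sigma_fin_ite (· = e) (fun _ => k) hk γ).trans (by simp))
    ((Fintype.sum_sigma_fin_ite (· = e) (fun _ => k + 1) hk' γ).trans (by simp))

lemma boundary_subdivide_comp_parentEdge {R : Type} [CommRing R] (γ : G.E → R) :
    (G.subdivide n).boundary R (γ ∘ parentEdge) = Sum.elim (G.boundary R γ) 0 := by
  funext w
  rcases w with v | ⟨e, k⟩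
  · refine (boundary_apply _ _ _).trans ?_
    rw [Sum.elim_inl, boundary_apply]
    simp only [subdivide_t_eq_inl_iff, subdivide_s_eq_inl_iff]
    exact congrArg₂ (· - ·)
      (Fintype.sum_sigma_fin_ite (G.t · = v) (fun e => n e - 1) (fun e _ => by simp) _)
      (Fintype.sum_sigma_fin_ite (G.s · = v) (fun _ => 0) (fun e _ => (n e).pos) _)
  · exact (boundary_subdivide_inr _ e k).trans (sub_self _)

lemma comp_parentEdge_mem_H1_subdivide_iff {R : Type} [CommRing R] {γ : G.E → R} :
    γ ∘ parentEdge ∈ (G.subdivide n).H1 R ↔ γ ∈ G.H1 R := by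
  have h := boundary_subdivide_comp_parentEdge (n := n) γ
  constructor
  · intro hγ
    funext v
    exact (congrFun h (.inl v)).symm.trans (congrFun (LinearMap.mem_ker.mp hγ) _)
  · intro hγ
    refine LinearMap.mem_ker.mpr (h.trans ?_)
    rw [LinearMap.mem_ker.mp hγ]
    funext w
    cases w <;> rfl

lemma apply_eq_of_mem_H1_subdivide {R : Type} [CommRing R] {γ : (G.subdivide n).E → R}
    (hγ : γ ∈ (G.subdivide n).H1 R) (e : G.E) (i : Fin (n e)) :
    γ ⟨e, i⟩ = γ ⟨e, ⟨0, (n e).pos⟩⟩ := by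
  obtain ⟨i, hi⟩ := i
  induction i with
  | zero => rfl
  | succ k ih =>
    have hk : k < n e - 1 := by omega
    have step := (boundary_subdivide_inr γ e ⟨k, hk⟩).symm.trans
      (congrFun (LinearMap.mem_ker.mp hγ) _)
    exact (sub_eq_zero.mp step).symm.trans (ih (by omega))

lemma exists_eq_comp_parentEdge_of_mem_H1 {R : Type} [CommRing R] {γ : (G.subdivide n).E → R}
    (hγ : γ ∈ (G.subdivide n).H1 R) : ∃ γ₀ ∈ G.H1 R, γ = γ₀ ∘ parentEdge := by
  have hconst : γ = (fun e => γ ⟨e, ⟨0, (n e).pos⟩⟩) ∘ parentEdge :=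
    funext fun ⟨e, i⟩ => apply_eq_of_mem_H1_subdivide hγ e i
  exact ⟨_, comp_parentEdge_mem_H1_subdivide_iff.mp (hconst ▸ hγ), hconst⟩

lemma H1_subdivide (R : Type) [CommRing R] :
    (G.subdivide n).H1 R = (G.H1 R).map (LinearMap.funLeft R R parentEdge) := by
  ext γ
  constructor
  · intro hγ
    obtain ⟨γ₀, hγ₀, rfl⟩ := exists_eq_comp_parentEdge_of_mem_H1 hγ
    exact ⟨γ₀, hγ₀, rfl⟩
  · rintro ⟨γ, hγ, rfl⟩
    exact comp_parentEdge_mem_H1_subdivide_iff.mpr hγ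

lemma finrank_H1_subdivide (R : Type) [CommRing R] :
    Module.finrank R ((G.subdivide n).H1 R) = Module.finrank R (G.H1 R) := by
  rw [H1_subdivide]
  exact (Submodule.equivMapOfInjective _ (LinearMap.funLeft_injective_of_surjective R R _
    fun e => ⟨⟨e, ⟨0, (n e).pos⟩⟩, rfl⟩) _).finrank_eq.symm

def IsForest (G : FinGraph) (T : Finset G.E) : Prop :=
  ∀ γ ∈ G.H1 ℤ, (∀ e ∉ T, γ e = 0) → γ = 0

lemma isMaxForest_iff (G : FinGraph) (T : Finset G.E) :
    G.IsMaxForest T ↔ G.IsForest T ∧ #Tᶜ = Module.finrank ℤ (G.H1 ℤ) :=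
  Iff.rfl

lemma finrank_H1_le_card_compl (G : FinGraph) {T : Finset G.E} (hT : G.IsForest T) :
    Module.finrank ℤ (G.H1 ℤ) ≤ #Tᶜ := by
  let restrict :=
    LinearMap.funLeft ℤ ℤ (Subtype.val : ↥Tᶜ → G.E) ∘ₗ (G.H1 ℤ).subtype
  have hinj : Function.Injective restrict := by
    refine (injective_iff_map_eq_zero restrict).mpr fun γ hγ => Subtype.ext ?_
    exact hT γ γ.2 fun e he => congrFun hγ ⟨e, mem_compl.mpr he⟩
  simpa [card_compl] using LinearMap.finrank_le_finrank_of_injective hinj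

lemma isForest_subdivide_iff {S : Finset (G.subdivide n).E} :
    (G.subdivide n).IsForest S ↔ G.IsForest (fullFibers parentEdge S) := by
  constructor
  · intro hS γ hγ hγT
    have hlift := hS _ (comp_parentEdge_mem_H1_subdivide_iff.mpr hγ) fun p hp =>
      hγT p.1 fun hfull => hp (mem_fullFibers.mp hfull p rfl)
    exact funext fun e => congrFun hlift ⟨e, ⟨0, (n e).pos⟩⟩
  · intro hT γ hγ hγS
    obtain ⟨γ₀, hγ₀, rfl⟩ := exists_eq_comp_parentEdge_of_mem_H1 hγ
    have hγ₀T : ∀ e ∉ fullFibers parentEdge S, γ₀ e = 0 := by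
      intro e he
      obtain ⟨p, rfl, hp⟩ : ∃ p, parentEdge p = e ∧ p ∉ S := by
        simpa [mem_fullFibers] using he
      exact hγS p hp
    rw [hT γ₀ hγ₀ hγ₀T]
    rfl

lemma isMaxForest_subdivide_iff {S : Finset (G.subdivide n).E} :
    (G.subdivide n).IsMaxForest S ↔
      G.IsMaxForest (fullFibers parentEdge S) ∧ ∀ e, #(fiberGaps parentEdge S e) ≤ 1 := by
  rw [isMaxForest_iff, isMaxForest_iff, isForest_subdivide_iff, finrank_H1_subdivide,
    ← card_compl_fullFibers_eq_iff]
  have hle := card_compl_fullFibers_le parentEdge S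
  constructor
  · rintro ⟨hT, hcard⟩
    have := finrank_H1_le_card_compl G hT
    exact ⟨⟨hT, by omega⟩, by omega⟩
  · rintro ⟨⟨hT, hcard⟩, heq⟩
    exact ⟨hT, by omega⟩

lemma card_filter_parentEdge_eq (e : G.E) :
    #(univ.filter fun p : (G.subdivide n).E => parentEdge p = e) = n e := by
  rw [card_filter]
  refine (Fintype.sum_sigma _).trans ?_
  rw [Fintype.sum_eq_single e fun e' he' => by simp [parentEdge, he']]
  simp [parentEdge]

end FinGraph

/-- The number of maximal spanning forests of the `n`-fragmentation `Γ_n` equals the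
Kirchhoff polynomial of `Γ` evaluated at `x_e = n_e`. -/
theorem card_forests_subdivide (G : FinGraph) (n : G.E → ℕ+) :
    (G.subdivide n).numMaxForests = G.kirchhoff ℕ (fun e => (n e : ℕ)) := by
  classical
  rw [FinGraph.numMaxForests, FinGraph.kirchhoff,
    Nat.card_congr (Equiv.subtypeEquivRight fun S => FinGraph.isMaxForest_subdivide_iff),
    card_subtype_fullFibers]
  simp [FinGraph.card_filter_parentEdge_eq]
end

section
/- Thus the monomials π^k x^m defining global sections of 𝓛 on 𝕎 are exactly those with k ≥ (m²+m)/2 + 1, i.e., the lattice points of the unbounded convex region Δ ⊂ ℝ², the convex hull of the points μ_n = ((n²+n)/2 + 1, n), n ∈ ℤ. Equivalently: for (k,m) ∈ ℤ², k ≥ (m²+m)/2 + 1 holds iff (k,m) lies in the closed convex hull of {((n²+n)/2+1, n) : n ∈ ℤ}. -/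
/-- The lattice points of the region `k ≥ (m²+m)/2 + 1` are exactly the lattice points of
the unbounded convex region `Δ ⊂ ℝ²`, the (closed) convex hull of the points
`μ_n = ((n²+n)/2 + 1, n)`, `n ∈ ℤ`. -/
theorem lattice_points_of_region (k m : ℤ) :
    ((m : ℝ) ^ 2 + m) / 2 + 1 ≤ (k : ℝ) ↔
      ((k : ℝ), (m : ℝ)) ∈
        closure (convexHull ℝ
          {p : ℝ × ℝ | ∃ n : ℤ, p = (((n : ℝ) ^ 2 + n) / 2 + 1, (n : ℝ))}) := by
  set S : Set (ℝ × ℝ) := {p : ℝ × ℝ | ∃ n : ℤ, p = (((n : ℝ) ^ 2 + n) / 2 + 1, (n : ℝ))}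
  constructor
  · intro hk
    set d : ℝ := (k : ℝ) - (((m : ℝ) ^ 2 + m) / 2 + 1) with hd
    have hd0 : 0 ≤ d := by simp only [hd]; linarith
    set n : ℤ := max 1 ⌈2 * d⌉ with hn
    have hn1 : (1 : ℤ) ≤ n := le_max_left _ _
    have hnr : (1 : ℝ) ≤ (n : ℝ) := by exact_mod_cast hn1
    have hnd : 2 * d ≤ (n : ℝ) := by
      calc 2 * d ≤ (⌈2 * d⌉ : ℝ) := Int.le_ceil _
        _ ≤ (n : ℝ) := by exact_mod_cast le_max_right _ _
    have hn2 : 2 * d ≤ (n : ℝ) ^ 2 := by nlinarith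
    have hnpos : (0 : ℝ) < (n : ℝ) ^ 2 := by nlinarith
    set s : ℝ := 2 * d / (n : ℝ) ^ 2 with hs
    have hs0 : 0 ≤ s := by positivity
    have hs1 : s ≤ 1 := by
      rw [hs, div_le_one hnpos]; exact hn2
    have hconv : Convex ℝ (convexHull ℝ S) := convex_convexHull ℝ S
    have h1 : ((((m : ℝ) : ℝ) ^ 2 + m) / 2 + 1, (m : ℝ)) ∈ convexHull ℝ S :=
      subset_convexHull ℝ S ⟨m, rfl⟩
    have h2 : ((((m - n : ℤ) : ℝ) ^ 2 + ((m - n : ℤ) : ℝ)) / 2 + 1, ((m - n : ℤ) : ℝ))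
        ∈ convexHull ℝ S := subset_convexHull ℝ S ⟨m - n, rfl⟩
    have h3 : ((((m + n : ℤ) : ℝ) ^ 2 + ((m + n : ℤ) : ℝ)) / 2 + 1, ((m + n : ℤ) : ℝ))
        ∈ convexHull ℝ S := subset_convexHull ℝ S ⟨m + n, rfl⟩
    have hq := hconv h2 h3 (by norm_num : (0:ℝ) ≤ 1/2) (by norm_num : (0:ℝ) ≤ 1/2)
      (by norm_num)
    have hfin := hconv h1 hq (by linarith : (0:ℝ) ≤ 1 - s) hs0 (by ring)
    apply subset_closure
    convert hfin using 1
    have hsn : s * ((n : ℝ) ^ 2) = 2 * d := by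
      rw [hs]; field_simp
    push_cast
    ext
    · simp only [Prod.fst_add, Prod.smul_fst, smul_eq_mul]
      have : (k : ℝ) = (((m : ℝ) ^ 2 + m) / 2 + 1) + d := by rw [hd]; ring
      rw [this]
      linear_combination (-1/2 : ℝ) * hsn
    · simp only [Prod.snd_add, Prod.smul_snd, smul_eq_mul]
      ring
  · intro hmem
    have hCc : Convex ℝ {p : ℝ × ℝ | (p.2 ^ 2 + p.2) / 2 + 1 ≤ p.1} := by
      intro p hp q hq a b ha hb hab
      simp only [Set.mem_setOf_eq, Prod.fst_add, Prod.snd_add, Prod.smul_fst,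
        Prod.smul_snd, smul_eq_mul] at *
      nlinarith [mul_nonneg (mul_nonneg ha hb) (sq_nonneg (p.2 - q.2)),
        mul_le_mul_of_nonneg_left hp ha, mul_le_mul_of_nonneg_left hq hb]
    have hCcl : IsClosed {p : ℝ × ℝ | (p.2 ^ 2 + p.2) / 2 + 1 ≤ p.1} := by
      apply isClosed_le <;> fun_prop
    have hsub : S ⊆ {p : ℝ × ℝ | (p.2 ^ 2 + p.2) / 2 + 1 ≤ p.1} := by
      rintro p ⟨n, rfl⟩
      simp
    have := closure_minimal (convexHull_min hsub hCc) hCcl hmem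
    simpa using this
end
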